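/- arXiv:2106.12711 — 4 statements merged into one kernel-verified Lean document; each statement's English description precedes it below -/
import Mathlib

section
/- (Sibson identity) For α ∈ (0,1) ∪ (1,∞), a conditional PMF p_{G|X} and PMF p_X with positive entries, define q*_G(g) := (Σ_x p(x) p(g|x)^α)^{1/α} / Σ_{g'} (Σ_x p(x) p(g'|x)^α)^{1/α}. Then for every PMF q_G with full support, the Sibson conditional Rényi divergence decomposes as D^S_α(p_{G|X} ‖ q_G | p_X) = D^S_α(p_{G|X} ‖ q*_G | p_X) + D_α(q*_G ‖ q_G), where D^S_α(p_{G|X}‖q_G|p_X) = (1/(α-1)) log Σ_x p(x) Σ_g p(g|x)^α q(g)^{1-α} and D_α is the Rényi divergence. -/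
/-- Sibson identity: For `α ∈ (0,1) ∪ (1,∞)`, a conditional PMF
`p_{G|X}` and PMF `p_X` with positive entries, with
`q*_G(g) ∝ (Σ_x p x * p(g|x)^α)^(1/α)`, the Sibson conditional Rényi divergence
decomposes as `D^S_α(p_{G|X}‖q_G|p_X) = D^S_α(p_{G|X}‖q*_G|p_X) + D_α(q*_G‖q_G)`
for every fully supported PMF `q_G`. -/
theorem sibson_identity
    {X G : Type*} [Fintype X] [Fintype G] [Nonempty X] [Nonempty G]
    (pX : X → ℝ) (hpX0 : ∀ x, 0 < pX x) (hpX1 : ∑ x, pX x = 1)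
    (W : X → G → ℝ) (hW0 : ∀ x g, 0 < W x g) (hW1 : ∀ x, ∑ g, W x g = 1)
    (α : ℝ) (hα : 0 < α) (hα1 : α ≠ 1)
    (qstar : G → ℝ)
    (hqstar : ∀ g, qstar g =
      (∑ x, pX x * W x g ^ α) ^ (1 / α) /
        ∑ g', (∑ x, pX x * W x g' ^ α) ^ (1 / α)) :
    ∀ q : G → ℝ, (∀ g, 0 < q g) → (∑ g, q g = 1) →
      (1 / (α - 1)) * Real.log (∑ x, pX x * ∑ g, W x g ^ α * q g ^ (1 - α)) =
        (1 / (α - 1)) * Real.log (∑ x, pX x * ∑ g, W x g ^ α * qstar g ^ (1 - α)) +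
          (1 / (α - 1)) * Real.log (∑ g, qstar g ^ α * q g ^ (1 - α)) := by
  intro q hq0 hq1
  set A : G → ℝ := fun g => ∑ x, pX x * W x g ^ α with hA
  have hApos : ∀ g, 0 < A g := fun g =>
    Finset.sum_pos (fun x _ => mul_pos (hpX0 x) (Real.rpow_pos_of_pos (hW0 x g) α))
      Finset.univ_nonempty
  set Z : ℝ := ∑ g, A g ^ (1 / α) with hZ
  have hZpos : 0 < Z :=
    Finset.sum_pos (fun g _ => Real.rpow_pos_of_pos (hApos g) _) Finset.univ_nonempty
  have hqs : ∀ g, qstar g = A g ^ (1 / α) / Z := hqstar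
  have hqspos : ∀ g, 0 < qstar g := fun g => by
    rw [hqs g]; exact div_pos (Real.rpow_pos_of_pos (hApos g) _) hZpos
  have hqssum : ∑ g, qstar g = 1 := by
    simp_rw [hqs, ← Finset.sum_div]
    exact div_self hZpos.ne'
  have hZαpos : 0 < Z ^ α := Real.rpow_pos_of_pos hZpos α
  have hkey : ∀ g, A g = qstar g ^ α * Z ^ α := by
    intro g
    have h1 : (A g ^ (1 / α)) ^ α = A g := by
      rw [← Real.rpow_mul (hApos g).le, one_div, inv_mul_cancel₀ hα.ne', Real.rpow_one]
    rw [hqs g, Real.div_rpow (Real.rpow_pos_of_pos (hApos g) _).le hZpos.le, h1,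
      div_mul_cancel₀ _ hZαpos.ne']
  have hswap : ∀ r : G → ℝ,
      (∑ x, pX x * ∑ g, W x g ^ α * r g) = ∑ g, A g * r g := by
    intro r
    simp_rw [Finset.mul_sum, hA, Finset.sum_mul]
    rw [Finset.sum_comm]
    refine Finset.sum_congr rfl fun g _ => Finset.sum_congr rfl fun x _ => by ring
  have hSq : 0 < ∑ g, qstar g ^ α * q g ^ (1 - α) :=
    Finset.sum_pos (fun g _ => mul_pos (Real.rpow_pos_of_pos (hqspos g) _)
      (Real.rpow_pos_of_pos (hq0 g) _)) Finset.univ_nonempty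
  have hsum1 : (∑ x, pX x * ∑ g, W x g ^ α * q g ^ (1 - α))
      = Z ^ α * ∑ g, qstar g ^ α * q g ^ (1 - α) := by
    rw [hswap, Finset.mul_sum]
    refine Finset.sum_congr rfl fun g _ => by rw [hkey g]; ring
  have hsum2 : (∑ x, pX x * ∑ g, W x g ^ α * qstar g ^ (1 - α)) = Z ^ α := by
    rw [hswap]
    have : ∀ g, A g * qstar g ^ (1 - α) = Z ^ α * qstar g := by
      intro g
      rw [hkey g]
      have : qstar g ^ α * qstar g ^ (1 - α) = qstar g := by
        rw [← Real.rpow_add (hqspos g)]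
        simp
      calc qstar g ^ α * Z ^ α * qstar g ^ (1 - α)
          = Z ^ α * (qstar g ^ α * qstar g ^ (1 - α)) := by ring
        _ = Z ^ α * qstar g := by rw [this]
    simp_rw [this, ← Finset.mul_sum, hqssum, mul_one]
  rw [hsum1, hsum2, Real.log_mul hZαpos.ne' hSq.ne']
  ring
end

section
/- As a consequence of the Sibson identity, for α > 1 the minimum over PMFs q_G of the Sibson conditional divergence D^S_α(p_{G|X} ‖ q_G | p_X) is attained at q*_G and equals (α/(α-1)) log Σ_g (Σ_x p(x) p(g|x)^α)^{1/α}. -/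
open Finset Real

private lemma renyi_nonneg {G : Type*} [Fintype G] (r q : G → ℝ)
    (hr0 : ∀ g, 0 < r g) (hr1 : ∑ g, r g = 1)
    (hq0 : ∀ g, 0 < q g) (hq1 : ∑ g, q g = 1)
    {α : ℝ} (hα : 1 < α) :
    1 ≤ ∑ g, r g ^ α * q g ^ (1 - α) := by
  have h := Real.rpow_arith_mean_le_arith_mean_rpow Finset.univ q (fun g => r g / q g)
    (fun g _ => (hq0 g).le) hq1 (fun g _ => (div_pos (hr0 g) (hq0 g)).le) hα.le
  have h1 : ∑ g, q g * (r g / q g) = 1 := by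
    rw [← hr1]
    exact Finset.sum_congr rfl fun g _ => by
      rw [mul_div_assoc', mul_comm, mul_div_assoc, div_self (hq0 g).ne', mul_one]
  rw [h1, Real.one_rpow] at h
  refine h.trans_eq (Finset.sum_congr rfl fun g _ => ?_)
  rw [Real.div_rpow (hr0 g).le (hq0 g).le, div_eq_mul_inv, ← Real.rpow_neg (hq0 g).le,
    ← mul_assoc, mul_comm (q g), mul_assoc, ← Real.rpow_one_add' (hq0 g).le
      (by intro h; nlinarith)]
  ring_nf

/-- For `α > 1`, the minimum over fully supported PMFs `q_G` of the
Sibson conditional divergence `D^S_α(p_{G|X}‖q_G|p_X)` is attained at `q*_G` and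
equals `(α/(α-1)) log Σ_g (Σ_x p x * p(g|x)^α)^(1/α)`. -/
theorem sibson_divergence_min_over_q
    {X G : Type*} [Fintype X] [Fintype G] [Nonempty X] [Nonempty G]
    (pX : X → ℝ) (hpX0 : ∀ x, 0 < pX x) (hpX1 : ∑ x, pX x = 1)
    (W : X → G → ℝ) (hW0 : ∀ x g, 0 < W x g) (hW1 : ∀ x, ∑ g, W x g = 1)
    (α : ℝ) (hα : 1 < α)
    (qstar : G → ℝ)
    (hqstar : ∀ g, qstar g =
      (∑ x, pX x * W x g ^ α) ^ (1 / α) /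
        ∑ g', (∑ x, pX x * W x g' ^ α) ^ (1 / α)) :
    (1 / (α - 1)) * Real.log (∑ x, pX x * ∑ g, W x g ^ α * qstar g ^ (1 - α)) =
        (α / (α - 1)) * Real.log (∑ g, (∑ x, pX x * W x g ^ α) ^ (1 / α)) ∧
      ∀ q : G → ℝ, (∀ g, 0 < q g) → (∑ g, q g = 1) →
        (1 / (α - 1)) * Real.log (∑ x, pX x * ∑ g, W x g ^ α * qstar g ^ (1 - α)) ≤
          (1 / (α - 1)) * Real.log (∑ x, pX x * ∑ g, W x g ^ α * q g ^ (1 - α)) := by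
  have hα0 : (0:ℝ) < α := by linarith
  set A : G → ℝ := fun g => ∑ x, pX x * W x g ^ α with hA
  have hA0 : ∀ g, 0 < A g := fun g =>
    Finset.sum_pos (fun x _ => by have := hW0 x g; have := hpX0 x; positivity) univ_nonempty
  set S : ℝ := ∑ g, A g ^ (1 / α) with hS
  have hS0 : 0 < S :=
    Finset.sum_pos (fun g _ => Real.rpow_pos_of_pos (hA0 g) _) univ_nonempty
  have key : ∀ q : G → ℝ, (∑ x, pX x * ∑ g, W x g ^ α * q g ^ (1 - α))
      = ∑ g, A g * q g ^ (1 - α) := by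
    intro q
    simp_rw [Finset.mul_sum]
    rw [Finset.sum_comm]
    refine Finset.sum_congr rfl fun g _ => ?_
    rw [hA]; simp only [Finset.sum_mul]
    exact Finset.sum_congr rfl fun x _ => by ring
  have hqpos : ∀ g, 0 < qstar g := fun g => by
    rw [hqstar g]; exact div_pos (Real.rpow_pos_of_pos (hA0 g) _) hS0
  have hqsum : ∑ g, qstar g = 1 := by
    simp_rw [hqstar]
    rw [← Finset.sum_div, div_self hS0.ne']
  have hA1 : ∀ g, A g ^ (1 / α) = qstar g * S := fun g => by
    rw [hqstar g, div_mul_cancel₀ _ hS0.ne']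
  have hAq : ∀ g, A g = qstar g ^ α * S ^ α := by
    intro g
    rw [← Real.mul_rpow (hqpos g).le hS0.le, ← hA1 g,
      ← Real.rpow_mul (hA0 g).le, one_div_mul_cancel hα0.ne', Real.rpow_one]
  have h3 : S * S ^ (α - 1) = S ^ α := by
    nth_rewrite 1 [← Real.rpow_one S]
    rw [← Real.rpow_add hS0]
    norm_num
  have hval : (∑ x, pX x * ∑ g, W x g ^ α * qstar g ^ (1 - α)) = S ^ α := by
    rw [key]
    have e : ∀ g, A g * qstar g ^ (1 - α) = A g ^ (1/α) * S ^ (α - 1) := by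
      intro g
      have h2 : qstar g ^ α * qstar g ^ (1 - α) = qstar g := by
        rw [← Real.rpow_add (hqpos g), show α + (1 - α) = 1 by ring, Real.rpow_one]
      rw [hA1 g, hAq g]
      calc qstar g ^ α * S ^ α * qstar g ^ (1 - α)
          = qstar g ^ α * qstar g ^ (1 - α) * S ^ α := by ring
        _ = qstar g * S ^ α := by rw [h2]
        _ = qstar g * (S * S ^ (α - 1)) := by rw [h3]
        _ = qstar g * S * S ^ (α - 1) := by ring
    simp_rw [e]
    rw [← Finset.sum_mul, ← hS, h3]
  refine ⟨by rw [hval, Real.log_rpow hS0]; ring, ?_⟩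
  intro q hq0 hq1
  rw [hval, key q]
  have hge : S ^ α ≤ ∑ g, A g * q g ^ (1 - α) := by
    have hr := renyi_nonneg qstar q hqpos hqsum hq0 hq1 hα
    have hSα : (0:ℝ) ≤ S ^ α := (Real.rpow_pos_of_pos hS0 α).le
    calc S ^ α = S ^ α * 1 := by ring
      _ ≤ S ^ α * ∑ g, qstar g ^ α * q g ^ (1 - α) := mul_le_mul_of_nonneg_left hr hSα
      _ = ∑ g, A g * q g ^ (1 - α) := by
          rw [Finset.mul_sum]
          exact Finset.sum_congr rfl fun g _ => by rw [hAq g]; ring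
  have h1 : (0:ℝ) < S ^ α := Real.rpow_pos_of_pos hS0 α
  exact mul_le_mul_of_nonneg_left (Real.log_le_log h1 hge)
    (div_nonneg zero_le_one (by linarith))
end

section
/- (Arimoto mutual information as betting advantage) For a joint PMF p_{XG} with positive entries, α > 1, R = 1/α, and constant positive odds o(x) = C: I_α(X;G) = log[ max_{b_{X|G}} w_R(b_{X|G}) / max_{b_X} w_R(b_X) ], where the numerator is the optimal isoelastic certainty equivalent with side information G and the denominator is the optimum without side information; that is, Arimoto's mutual information equals the log of the ratio of the optimal certainty equivalents. -/
lemma simplex_holder_ub {X : Type*} [Fintype X] {w : X → ℝ} (hw : ∀ x, 0 ≤ w x)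
    {α : ℝ} (hα : 1 < α) {b : X → ℝ} (hb : ∀ x, 0 ≤ b x) (hb1 : ∑ x, b x = 1) :
    ∑ x, w x * b x ^ (1 - 1/α) ≤ (∑ x, w x ^ α) ^ (1/α) := by
  have hα0 : (0:ℝ) < α := lt_trans one_pos hα
  have hα1 : α - 1 ≠ 0 := by linarith
  have hq : α.HolderConjugate (α / (α - 1)) := (Real.holderConjugate_iff_eq_conjExponent hα).2 rfl
  have h := Real.inner_le_Lp_mul_Lq_of_nonneg (s := Finset.univ) (f := w)
    (g := fun x => b x ^ (1 - 1/α)) hq (fun i _ => hw i)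
    (fun i _ => Real.rpow_nonneg (hb i) _)
  have hbq : ∀ x : X, (b x ^ (1 - 1/α)) ^ (α/(α-1)) = b x := by
    intro x
    rw [← Real.rpow_mul (hb x)]
    have : (1 - 1/α) * (α/(α-1)) = 1 := by field_simp
    rw [this, Real.rpow_one]
  simp only [hbq] at h
  calc ∑ x, w x * b x ^ (1 - 1/α) ≤ (∑ x, w x ^ α) ^ (1/α) * (∑ x, b x) ^ (1/(α/(α-1))) := h
    _ = (∑ x, w x ^ α) ^ (1/α) := by rw [hb1, Real.one_rpow, mul_one]

lemma simplex_holder_opt {X : Type*} [Fintype X] [Nonempty X] {w : X → ℝ} (hw : ∀ x, 0 < w x)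
    {α : ℝ} (hα : 1 < α) :
    ∑ x, w x * (w x ^ α / (∑ y, w y ^ α)) ^ (1 - 1/α) = (∑ x, w x ^ α) ^ (1/α) := by
  have hα0 : (0:ℝ) < α := lt_trans one_pos hα
  set S := ∑ y, w y ^ α with hS
  have hS0 : 0 < S := Finset.sum_pos (fun y _ => Real.rpow_pos_of_pos (hw y) α)
    Finset.univ_nonempty
  have key : ∀ x : X, w x * (w x ^ α / S) ^ (1 - 1/α) = w x ^ α * S ^ (1/α - 1) := by
    intro x
    rw [Real.div_rpow (Real.rpow_nonneg (hw x).le α) hS0.le, ← Real.rpow_mul (hw x).le]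
    have h1 : α * (1 - 1/α) = α - 1 := by field_simp
    rw [h1]
    rw [show (1/α - 1 : ℝ) = -(1 - 1/α) by ring, Real.rpow_neg hS0.le, div_eq_mul_inv]
    rw [show α = 1 + (α - 1) by ring, Real.rpow_add (hw x), Real.rpow_one]
    ring
  rw [Finset.sum_congr rfl (fun x _ => key x), ← Finset.sum_mul, ← hS]
  nth_rewrite 1 [← Real.rpow_one S]
  rw [← Real.rpow_add hS0]
  ring_nf

lemma unconditional_greatest {X : Type*} [Fintype X] [Nonempty X] {w : X → ℝ}
    (hw : ∀ x, 0 < w x) {α : ℝ} (hα : 1 < α) {C : ℝ} (hC : 0 < C) :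
    IsGreatest {v : ℝ | ∃ b : X → ℝ, (∀ x, 0 ≤ b x) ∧ (∑ x, b x = 1) ∧
        v = (∑ x, w x * (b x * C) ^ (1 - 1/α)) ^ (1 / (1 - 1/α))}
      (C * (∑ x, w x ^ α) ^ (1/(α-1))) := by
  have hα0 : (0:ℝ) < α := lt_trans one_pos hα
  have hα1 : α - 1 ≠ 0 := by linarith
  have he0 : (0:ℝ) < 1 - 1/α := by
    rw [sub_pos, div_lt_one hα0]; exact hα
  set e : ℝ := 1 - 1/α with hedef
  set S := ∑ y, w y ^ α with hS
  have hS0 : 0 < S := Finset.sum_pos (fun y _ => Real.rpow_pos_of_pos (hw y) α)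
    Finset.univ_nonempty
  have hsplit : ∀ b : X → ℝ, (∀ x, 0 ≤ b x) →
      ∑ x, w x * (b x * C) ^ e = C ^ e * ∑ x, w x * b x ^ e := by
    intro b hb
    rw [Finset.mul_sum]
    refine Finset.sum_congr rfl fun x _ => ?_
    rw [Real.mul_rpow (hb x) hC.le]; ring
  have hval : (C ^ e * S ^ (1/α)) ^ (1/e) = C * S ^ (1/(α-1)) := by
    rw [Real.mul_rpow (Real.rpow_nonneg hC.le e) (Real.rpow_nonneg hS0.le _),
      ← Real.rpow_mul hC.le, ← Real.rpow_mul hS0.le,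
      show e * (1/e) = 1 by field_simp, Real.rpow_one,
      show (1/α) * (1/e) = 1/(α-1) by rw [hedef]; field_simp]
  constructor
  · refine ⟨fun x => w x ^ α / S, fun x => div_nonneg (Real.rpow_nonneg (hw x).le α) hS0.le,
      by rw [← Finset.sum_div, ← hS, div_self hS0.ne'], ?_⟩
    rw [hsplit _ (fun x => div_nonneg (Real.rpow_nonneg (hw x).le α) hS0.le),
      simplex_holder_opt hw hα, ← hS, hval]
  · rintro v ⟨b, hb, hb1, rfl⟩
    rw [hsplit b hb, ← hval]
    have hnn : 0 ≤ ∑ x, w x * b x ^ e :=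
      Finset.sum_nonneg fun x _ => mul_nonneg (hw x).le (Real.rpow_nonneg (hb x) e)
    refine Real.rpow_le_rpow (mul_nonneg (Real.rpow_nonneg hC.le e) hnn) ?_ (by positivity)
    exact mul_le_mul_of_nonneg_left (simplex_holder_ub (fun x => (hw x).le) hα hb hb1)
      (Real.rpow_nonneg hC.le e)

lemma conditional_greatest {X G : Type*} [Fintype X] [Fintype G] [Nonempty X] [Nonempty G]
    {p : X → G → ℝ} (hp0 : ∀ x g, 0 < p x g) {α : ℝ} (hα : 1 < α) {C : ℝ} (hC : 0 < C) :
    IsGreatest {v : ℝ | ∃ b : X → G → ℝ, (∀ x g, 0 ≤ b x g) ∧ (∀ g, ∑ x, b x g = 1) ∧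
        v = (∑ x, ∑ g, p x g * (b x g * C) ^ (1 - 1/α)) ^ (1 / (1 - 1/α))}
      (C * (∑ g, (∑ x, p x g ^ α) ^ (1/α)) ^ (α/(α-1))) := by
  have hα0 : (0:ℝ) < α := lt_trans one_pos hα
  have hα1 : α - 1 ≠ 0 := by linarith
  have he0 : (0:ℝ) < 1 - 1/α := by
    rw [sub_pos, div_lt_one hα0]; exact hα
  set e : ℝ := 1 - 1/α with hedef
  set T := ∑ g, (∑ x, p x g ^ α) ^ (1/α) with hT
  have hSg0 : ∀ g : G, 0 < ∑ x, p x g ^ α := fun g =>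
    Finset.sum_pos (fun x _ => Real.rpow_pos_of_pos (hp0 x g) α) Finset.univ_nonempty
  have hT0 : 0 < T := Finset.sum_pos
    (fun g _ => Real.rpow_pos_of_pos (hSg0 g) _) Finset.univ_nonempty
  have hsplit : ∀ b : X → G → ℝ, (∀ x g, 0 ≤ b x g) →
      ∑ x, ∑ g, p x g * (b x g * C) ^ e
        = C ^ e * ∑ g, ∑ x, p x g * b x g ^ e := by
    intro b hb
    rw [Finset.sum_comm, Finset.mul_sum]
    refine Finset.sum_congr rfl fun g _ => ?_
    rw [Finset.mul_sum]
    refine Finset.sum_congr rfl fun x _ => ?_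
    rw [Real.mul_rpow (hb x g) hC.le]; ring
  have hval : (C ^ e * T) ^ (1/e) = C * T ^ (α/(α-1)) := by
    rw [Real.mul_rpow (Real.rpow_nonneg hC.le e) hT0.le,
      ← Real.rpow_mul hC.le, show e * (1/e) = 1 by field_simp, Real.rpow_one,
      show (1/e : ℝ) = α/(α-1) by rw [hedef]; field_simp]
  constructor
  · refine ⟨fun x g => p x g ^ α / (∑ y, p y g ^ α),
      fun x g => div_nonneg (Real.rpow_nonneg (hp0 x g).le α) (hSg0 g).le,
      fun g => by rw [← Finset.sum_div, div_self (hSg0 g).ne'], ?_⟩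
    rw [hsplit _ (fun x g => div_nonneg (Real.rpow_nonneg (hp0 x g).le α) (hSg0 g).le)]
    have : ∀ g : G, ∑ x, p x g * (p x g ^ α / (∑ y, p y g ^ α)) ^ e
        = (∑ x, p x g ^ α) ^ (1/α) := fun g =>
      simplex_holder_opt (w := fun x => p x g) (fun x => hp0 x g) hα
    rw [Finset.sum_congr rfl (fun g _ => this g), ← hT, hval]
  · rintro v ⟨b, hb, hb1, rfl⟩
    rw [hsplit b hb, ← hval]
    have hnn : 0 ≤ ∑ g, ∑ x, p x g * b x g ^ e :=
      Finset.sum_nonneg fun g _ => Finset.sum_nonneg fun x _ =>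
        mul_nonneg (hp0 x g).le (Real.rpow_nonneg (hb x g) e)
    refine Real.rpow_le_rpow (mul_nonneg (Real.rpow_nonneg hC.le e) hnn) ?_ (by positivity)
    refine mul_le_mul_of_nonneg_left ?_ (Real.rpow_nonneg hC.le e)
    rw [hT]
    exact Finset.sum_le_sum fun g _ =>
      simplex_holder_ub (w := fun x => p x g) (fun x => (hp0 x g).le) hα
        (fun x => hb x g) (hb1 g)

/-- Arimoto mutual information as betting advantage: for a positive
joint PMF, `α > 1`, `R = 1/α`, constant odds `C > 0`, if `Wc` is the optimal
isoelastic certainty equivalent over conditional betting strategies (with side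
information `G`) and `Wu` the optimum over unconditional strategies, then
`I_α(X;G) = H_α(X) - H_α(X|G) = log (Wc / Wu)`. -/
theorem arimoto_mutual_information_eq_log_betting_ratio
    {X G : Type*} [Fintype X] [Fintype G] [Nonempty X] [Nonempty G]
    (p : X → G → ℝ) (hp0 : ∀ x g, 0 < p x g) (hp1 : ∑ x, ∑ g, p x g = 1)
    (α : ℝ) (hα : 1 < α) (R : ℝ) (hR : R = 1 / α)
    (C : ℝ) (hC : 0 < C)
    (Wc Wu : ℝ)
    (hWc : IsGreatest
      {w : ℝ | ∃ b : X → G → ℝ, (∀ x g, 0 ≤ b x g) ∧ (∀ g, ∑ x, b x g = 1) ∧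
        w = (∑ x, ∑ g, p x g * (b x g * C) ^ (1 - R)) ^ (1 / (1 - R))} Wc)
    (hWu : IsGreatest
      {w : ℝ | ∃ b : X → ℝ, (∀ x, 0 ≤ b x) ∧ (∑ x, b x = 1) ∧
        w = (∑ x, (∑ g, p x g) * (b x * C) ^ (1 - R)) ^ (1 / (1 - R))} Wu) :
    (1 / (1 - α)) * Real.log (∑ x, (∑ g, p x g) ^ α) -
        (α / (1 - α)) * Real.log (∑ g, (∑ x, p x g ^ α) ^ (1 / α)) =
      Real.log (Wc / Wu) := by
  subst hR
  have hα0 : (0:ℝ) < α := lt_trans one_pos hα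
  have hα1 : α - 1 ≠ 0 := by linarith
  have hα1' : (1:ℝ) - α ≠ 0 := by linarith
  have hq : ∀ x : X, 0 < ∑ g, p x g :=
    fun x => Finset.sum_pos (fun g _ => hp0 x g) Finset.univ_nonempty
  set S := ∑ x, (∑ g, p x g) ^ α with hSdef
  set T := ∑ g, (∑ x, p x g ^ α) ^ (1/α) with hTdef
  have hS0 : 0 < S := Finset.sum_pos
    (fun x _ => Real.rpow_pos_of_pos (hq x) α) Finset.univ_nonempty
  have hSg0 : ∀ g : G, 0 < ∑ x, p x g ^ α := fun g =>
    Finset.sum_pos (fun x _ => Real.rpow_pos_of_pos (hp0 x g) α) Finset.univ_nonempty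
  have hT0 : 0 < T := Finset.sum_pos
    (fun g _ => Real.rpow_pos_of_pos (hSg0 g) _) Finset.univ_nonempty
  have hWuEq : Wu = C * S ^ (1/(α-1)) :=
    hWu.unique (unconditional_greatest (w := fun x => ∑ g, p x g) hq hα hC)
  have hWcEq : Wc = C * T ^ (α/(α-1)) :=
    hWc.unique (conditional_greatest hp0 hα hC)
  have hWu0 : Wu ≠ 0 := by
    rw [hWuEq]; positivity
  have hWc0 : Wc ≠ 0 := by
    rw [hWcEq]; positivity
  rw [Real.log_div hWc0 hWu0, hWuEq, hWcEq,
    Real.log_mul hC.ne' (Real.rpow_pos_of_pos hT0 _).ne',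
    Real.log_mul hC.ne' (Real.rpow_pos_of_pos hS0 _).ne',
    Real.log_rpow hT0, Real.log_rpow hS0]
  field_simp
  ring
end

section
/- (Optimality of proportional-power betting without side information, gain game) Let p_X be a PMF with full support on a finite alphabet, α > 1, R = 1/α ∈ (0,1), and odds o(x) > 0 (not necessarily constant). Then the betting strategy b*(x) = p(x)^{1/R} o(x)^{(1-R)/R} / Σ_{x'} p(x')^{1/R} o(x')^{(1-R)/R} maximizes the isoelastic certainty equivalent w_R(b) = (Σ_x p(x)(b(x)o(x))^{1-R})^{1/(1-R)} over all PMFs b on X. -/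
/-- Optimality of proportional-power betting without side
information, gain game: for a full-support PMF `p`, `α > 1`, `R = 1/α ∈ (0,1)`,
and arbitrary positive odds `o`, the strategy
`b* x = p x ^ (1/R) * o x ^ ((1-R)/R) / Σ_{x'} p x' ^ (1/R) * o x' ^ ((1-R)/R)`
maximizes `w_R(b) = (Σ_x p x * (b x * o x)^(1-R))^(1/(1-R))` over all PMFs `b`. -/
theorem proportional_power_betting_optimal
    {X : Type*} [Fintype X] [Nonempty X]
    (p : X → ℝ) (hp0 : ∀ x, 0 < p x) (hp1 : ∑ x, p x = 1)
    (α : ℝ) (hα : 1 < α) (R : ℝ) (hR : R = 1 / α)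
    (o : X → ℝ) (ho : ∀ x, 0 < o x)
    (bstar : X → ℝ)
    (hbstar : ∀ x, bstar x =
      p x ^ (1 / R) * o x ^ ((1 - R) / R) /
        ∑ x', p x' ^ (1 / R) * o x' ^ ((1 - R) / R)) :
    ∀ b : X → ℝ, (∀ x, 0 ≤ b x) → (∑ x, b x = 1) →
      (∑ x, p x * (b x * o x) ^ (1 - R)) ^ (1 / (1 - R)) ≤
        (∑ x, p x * (bstar x * o x) ^ (1 - R)) ^ (1 / (1 - R)) := by
  intro b hb0 hb1
  have hR0 : 0 < R := by rw [hR]; positivity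
  have hR1 : R < 1 := by
    rw [hR]; rw [div_lt_one (lt_trans one_pos hα)]; exact hα
  have hs0 : 0 < 1 - R := by linarith
  -- Z : normalizing constant
  set Z : ℝ := ∑ x', p x' ^ (1 / R) * o x' ^ ((1 - R) / R) with hZ
  have hZpos : 0 < Z := by
    apply Finset.sum_pos _ Finset.univ_nonempty
    intro x _
    exact mul_pos (Real.rpow_pos_of_pos (hp0 x) _) (Real.rpow_pos_of_pos (ho x) _)
  -- the value for bstar is Z ^ R
  have key : (∑ x, p x * (bstar x * o x) ^ (1 - R)) = Z ^ R := by
    have hterm : ∀ x : X, p x * (bstar x * o x) ^ (1 - R)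
        = (p x ^ (1 / R) * o x ^ ((1 - R) / R)) / Z ^ (1 - R) := by
      intro x
      have hpx := hp0 x
      have hox := ho x
      have e1 : bstar x * o x = p x ^ (1 / R) * o x ^ (1 / R) / Z := by
        rw [hbstar x, div_mul_eq_mul_div, mul_assoc]
        congr 2
        nth_rewrite 2 [← Real.rpow_one (o x)]
        rw [← Real.rpow_add hox]
        congr 1; field_simp; ring
      rw [e1, Real.div_rpow (by positivity) hZpos.le,
        Real.mul_rpow (by positivity) (by positivity),
        ← Real.rpow_mul hpx.le, ← Real.rpow_mul hox.le]
      have e2 : 1 / R * (1 - R) = (1 - R) / R := by ring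
      rw [e2, mul_div_assoc', ← mul_assoc]
      congr 2
      nth_rewrite 1 [← Real.rpow_one (p x)]
      rw [← Real.rpow_add hpx]
      congr 1; field_simp; ring
    rw [Finset.sum_congr rfl (fun x _ => hterm x), ← Finset.sum_div, ← hZ,
      div_eq_iff (ne_of_gt (Real.rpow_pos_of_pos hZpos _)),
      ← Real.rpow_add hZpos]
    norm_num
  -- Hölder bound for arbitrary b
  have holder : (∑ x, p x * (b x * o x) ^ (1 - R)) ≤ Z ^ R := by
    have hconj : Real.HolderConjugate (1 / R) (1 / (1 - R)) := by
      rw [Real.holderConjugate_iff]; constructor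
      · rw [lt_div_iff₀ hR0]; simpa using hR1
      · simp [one_div, inv_inv]
    have := Real.inner_le_Lp_mul_Lq_of_nonneg (s := Finset.univ)
      (f := fun x => p x * o x ^ (1 - R)) (g := fun x => b x ^ (1 - R)) hconj
      (fun i _ => by have := hp0 i; have := ho i; positivity)
      (fun i _ => by have := hb0 i; positivity)
    have hfg : ∀ x : X, (p x * o x ^ (1 - R)) * (b x ^ (1 - R))
        = p x * (b x * o x) ^ (1 - R) := by
      intro x
      rw [Real.mul_rpow (hb0 x) (ho x).le]; ring
    have hf : ∀ x : X, (p x * o x ^ (1 - R)) ^ (1 / R)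
        = p x ^ (1 / R) * o x ^ ((1 - R) / R) := by
      intro x
      have hox := ho x
      rw [Real.mul_rpow (hp0 x).le (by positivity), ← Real.rpow_mul (ho x).le]
      congr 2
      ring
    have hg : ∀ x : X, (b x ^ (1 - R)) ^ (1 / (1 - R)) = b x := by
      intro x
      rw [← Real.rpow_mul (hb0 x), mul_one_div, div_self hs0.ne', Real.rpow_one]
    rw [Finset.sum_congr rfl (fun x _ => hfg x)] at this
    rw [Finset.sum_congr rfl (fun x _ => hf x)] at this
    rw [Finset.sum_congr rfl (fun x _ => hg x), hb1] at this
    rw [← hZ] at this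
    simpa [one_div_one_div] using this
  rw [key]
  apply Real.rpow_le_rpow _ holder (one_div_nonneg.mpr hs0.le)
  apply Finset.sum_nonneg
  intro x _
  exact mul_nonneg (hp0 x).le (Real.rpow_nonneg (mul_nonneg (hb0 x) (ho x).le) _)
end
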